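/- Let M be a manifold admitting a decomposition M = ⋃_{α<ω₁} U_α, where each U_α is open and separable, cl(U_α) ⊆ U_β whenever α < β, and U_λ = ⋃_{α<λ} U_α for every limit ordinal λ < ω₁. Let ℱ be a foliation on M all of whose leaves are metrisable in the leaf topology. Then C = {α < ω₁ : U_α is saturated by ℱ} is a closed unbounded subset of ω₁ (with its order topology). -/

import Mathlib

noncomputable section

open Set Topology Filter

universe u

/-! ### The long ray and the long line -/

/-- The first uncountable ordinal `ω₁`, viewed as the linearly ordered set of all
countable ordinals. -/
def Omega1 : Type 1 := {o : Ordinal.{0} // o < (Cardinal.aleph 1).ord}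

instance : LinearOrder Omega1 :=
  inferInstanceAs (LinearOrder {o : Ordinal.{0} // o < (Cardinal.aleph 1).ord})

/-- `ω₁` carries the order topology. -/
instance : TopologicalSpace Omega1 := Preorder.topology Omega1

instance : OrderTopology Omega1 := ⟨rfl⟩

/-- The underlying countable ordinal of an element of `ω₁`. -/
def Omega1.toOrdinal : Omega1 → Ordinal.{0} := Subtype.val

/-- The closed long ray `𝕃≥0`: the set `ω₁ × [0,1)` with the lexicographic order and the
order topology. -/
def ClosedLongRay : Type 1 := Omega1 ×ₗ (Set.Ico (0:ℝ) 1)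

instance : LinearOrder ClosedLongRay :=
  inferInstanceAs (LinearOrder (Omega1 ×ₗ (Set.Ico (0:ℝ) 1)))

instance : TopologicalSpace ClosedLongRay := Preorder.topology ClosedLongRay

instance : OrderTopology ClosedLongRay := ⟨rfl⟩

/-- The long ray `𝕃₊`: the closed long ray with its least element removed, with the
subspace topology (an element is non-minimal iff something is below it). -/
def LongRay : Type 1 := {x : ClosedLongRay // ∃ y, y < x}

instance : LinearOrder LongRay :=
  inferInstanceAs (LinearOrder {x : ClosedLongRay // ∃ y, y < x})

instance : TopologicalSpace LongRay :=
  inferInstanceAs (TopologicalSpace {x : ClosedLongRay // ∃ y, y < x})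

/-- The inclusion of the long ray into the closed long ray. -/
def LongRay.toCLR : LongRay → ClosedLongRay := Subtype.val

/-- The long line `𝕃`: an order-reversed copy of `𝕃₊` placed below the closed long ray
`𝕃≥0`, with the order topology. -/
def LongLine : Type 1 := (OrderDual LongRay) ⊕ₗ ClosedLongRay

instance : LinearOrder LongLine :=
  inferInstanceAs (LinearOrder ((OrderDual LongRay) ⊕ₗ ClosedLongRay))

instance : TopologicalSpace LongLine := Preorder.topology LongLine

instance : OrderTopology LongLine := ⟨rfl⟩

/-- The identification of `𝕃₊` with the set of positive elements of `𝕃`. -/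
def LongRay.inL (a : LongRay) : LongLine := toLex (Sum.inr a.toCLR)

/-- The natural order-reversing involution `x ↦ -x` of the long line, exchanging the two
copies of `𝕃₊` and fixing the least element `0` of `𝕃≥0`. -/
noncomputable def LongLine.neg (x : LongLine) : LongLine :=
  match ofLex x with
  | Sum.inl a => toLex (Sum.inr (OrderDual.ofDual a).toCLR)
  | Sum.inr b =>
      @dite _ (∃ y, y < b) (Classical.dec _)
        (fun h => toLex (Sum.inl (OrderDual.toDual (⟨b, h⟩ : LongRay))))
        (fun _ => x)

/-- A subset of the long ray is a *club* if it is closed (in the topology of `𝕃₊`) and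
unbounded (i.e. cofinal). -/
def ClubInLongRay (C : Set LongRay) : Prop :=
  IsClosed C ∧ ∀ β : LongRay, ∃ α ∈ C, β ≤ α

/-- A topological space `X` is *squat* if every continuous map `𝕃₊ → X` is eventually
constant. -/
def Squat (X : Type*) [TopologicalSpace X] : Prop :=
  ∀ f : LongRay → X, Continuous f → ∃ (β : LongRay) (x : X), ∀ α, β ≤ α → f α = x

/-! ### Manifolds and foliations -/

/-- A (topological) `n`-manifold: a nonempty Hausdorff space in which every point has an
open neighbourhood homeomorphic to `ℝⁿ`. -/
def IsTopManifold (M : Type u) [TopologicalSpace M] (n : ℕ) : Prop :=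
  Nonempty M ∧ T2Space M ∧
    ∀ x : M, ∃ U : Set M, x ∈ U ∧ IsOpen U ∧ Nonempty (U ≃ₜ (Fin n → ℝ))

/-- A foliation of dimension `p` and codimension `q` on a space `M`: a family of charts
`φᵢ : Uᵢ ≃ₜ ℝᵖ × ℝ^q` on open sets covering `M` such that all coordinate transformations
have the form `(x, y) ↦ (g (x, y), h y)`, i.e. the last `q` coordinates of the image
depend only on the last `q` coordinates of the argument. -/
structure Foliation (M : Type u) [TopologicalSpace M] (p q : ℕ) where
  /-- index type of the atlas -/
  ι : Type u
  /-- chart domains -/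
  U : ι → Set M
  /-- the charts -/
  chart : (i : ι) → ((U i) ≃ₜ ((Fin p → ℝ) × (Fin q → ℝ)))
  isOpen : ∀ i, IsOpen (U i)
  covers : ∀ x : M, ∃ i, x ∈ U i
  compat : ∀ i j (x y : M) (hxi : x ∈ U i) (hxj : x ∈ U j) (hyi : y ∈ U i) (hyj : y ∈ U j),
    (chart i ⟨x, hxi⟩).2 = (chart i ⟨y, hyi⟩).2 → (chart j ⟨x, hxj⟩).2 = (chart j ⟨y, hyj⟩).2

namespace Foliation

variable {M : Type u} [TopologicalSpace M] {p q : ℕ}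

/-- The set `φᵢ⁻¹ (ℝᵖ × {y})` in the chart domain `Uᵢ`. -/
def plaqueFibre (F : Foliation M p q) (i : F.ι) (y : Fin q → ℝ) : Set M :=
  {w : M | ∃ hw : w ∈ F.U i, (F.chart i ⟨w, hw⟩).2 = y}

/-- A *plaque* of the foliation: a connected component of a set of the form
`φᵢ⁻¹ (ℝᵖ × {y})`. -/
def IsPlaque (F : Foliation M p q) (P : Set M) : Prop :=
  ∃ (i : F.ι) (y : Fin q → ℝ) (z : M), z ∈ F.plaqueFibre i y ∧
    P = connectedComponentIn (F.plaqueFibre i y) z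

/-- Two points lie in a common plaque. -/
def samePlaque (F : Foliation M p q) (x y : M) : Prop :=
  ∃ P, F.IsPlaque P ∧ x ∈ P ∧ y ∈ P

/-- The leaf relation: the smallest equivalence relation relating any two points that lie
in a common plaque. -/
def leafRel (F : Foliation M p q) : M → M → Prop := Relation.EqvGen F.samePlaque

/-- The *leaves* of the foliation: equivalence classes of the leaf relation. -/
def IsLeaf (F : Foliation M p q) (L : Set M) : Prop :=
  ∃ x : M, L = {y | F.leafRel x y}

/-- The *leaf topology* on a leaf (or any subset) `L`: the topology generated by the
plaques contained in `L`. -/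
def leafTopology (F : Foliation M p q) (L : Set M) : TopologicalSpace L :=
  TopologicalSpace.generateFrom
    {s : Set L | ∃ P, F.IsPlaque P ∧ P ⊆ L ∧ s = Subtype.val ⁻¹' P}

/-- A leaf is *long* if it is not metrisable in its leaf topology. -/
def IsLongLeaf (F : Foliation M p q) (L : Set M) : Prop :=
  F.IsLeaf L ∧ ¬ @TopologicalSpace.MetrizableSpace L (F.leafTopology L)

/-- A subset of `M` is *saturated* by the foliation if it is a union of leaves. -/
def Saturated (F : Foliation M p q) (S : Set M) : Prop :=
  ∀ x ∈ S, ∀ y, F.leafRel x y → y ∈ S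

end Foliation

/-!
A leaf that is metrisable in its leaf topology is paracompact and connected, and each of its
points has an open Lindelöf neighbourhood, its plaque; so the leaf is Lindelöf, hence a countable
union of plaques and separable as a subset of `M`. Since closures of saturated sets are saturated,
the saturation of the separable set `U α` is separable, so it lies in some `U (f α)`, countable
subsets of `ω₁` being bounded. Every limit `l` with `f α < l` for all `α < l` then has
`U l = ⋃_{α<l} U α` saturated, and such `l` are unbounded. In the same way `U l` is saturated
whenever `l` is a limit of ordinals `α` with `U α` saturated.
-/

open TopologicalSpace

theorem Order.isSuccLimit_of_exists_between {α : Type*} [Preorder α] {a : α}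
    (hmin : ∃ b, b < a) (h : ∀ b < a, ∃ c, b < c ∧ c < a) : Order.IsSuccLimit a :=
  ⟨not_isMin_iff.mpr hmin, fun b hb =>
    let ⟨_, hbc, hca⟩ := h b hb.lt
    hb.2 hbc hca⟩

namespace Omega1

lemma isSuccLimit_toOrdinal {l : Omega1} (hl : Order.IsSuccLimit l) :
    Order.IsSuccLimit l.toOrdinal :=
  Order.IsSuccLimit.subtypeVal (s := Iio (Cardinal.aleph 1).ord) (isLowerSet_Iio _) hl

lemma iSup_lt_ord {a : ℕ → Ordinal.{0}} (ha : ∀ n, a n < (Cardinal.aleph 1).ord) :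
    ⨆ n, a n < (Cardinal.aleph 1).ord :=
  Ordinal.iSup_lt_of_lt_cof (by
    rw [Cardinal.isRegular_aleph_one.cof_ord, Cardinal.mk_nat]
    exact Cardinal.aleph0_lt_aleph_one) ha

def succ (α : Omega1) : Omega1 :=
  ⟨Order.succ α.toOrdinal, (Cardinal.isSuccLimit_ord (Cardinal.aleph0_le_aleph 1)).succ_lt α.2⟩

lemma covBy_succ (α : Omega1) : α ⋖ succ α :=
  ⟨Order.lt_succ α.toOrdinal, fun β h₁ h₂ =>
    (Order.lt_succ_iff.mp (show β.toOrdinal < Order.succ α.toOrdinal from h₂)).not_gt h₁⟩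

lemma countable_Iic (α : Omega1) : (Iic α).Countable := by
  have : (Iio (succ α).toOrdinal).Countable := by
    rw [← Cardinal.le_aleph0_iff_set_countable, Cardinal.mk_Iio_ordinal, Cardinal.lift_le_aleph0,
      ← Cardinal.lt_aleph_one_iff, ← Cardinal.lt_ord]
    exact (succ α).2
  rw [← (covBy_succ α).Iio_eq]
  exact this.preimage Subtype.val_injective

lemma exists_gt_of_countable {s : Set Omega1} (hs : s.Countable) : ∃ γ, ∀ x ∈ s, x < γ := by
  rcases s.eq_empty_or_nonempty with rfl | hne
  · exact ⟨⟨0, (Cardinal.isSuccLimit_ord (Cardinal.aleph0_le_aleph 1)).pos⟩, by simp⟩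
  obtain ⟨f, rfl⟩ := hs.exists_eq_range hne
  refine ⟨⟨⨆ n, (succ (f n)).toOrdinal, iSup_lt_ord fun n => (succ (f n)).2⟩, ?_⟩
  rintro _ ⟨n, rfl⟩
  exact (covBy_succ (f n)).lt.trans_le (Ordinal.le_iSup (fun n => (succ (f n)).toOrdinal) n)

lemma exists_isSuccLimit_lt_iff {a : ℕ → Omega1} (ha : StrictMono a) :
    ∃ l : Omega1, Order.IsSuccLimit l ∧ ∀ δ, δ < l ↔ ∃ n, δ < a n := by
  let l : Omega1 := ⟨⨆ n, (a n).toOrdinal, iSup_lt_ord fun n => (a n).2⟩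
  have hlt : ∀ δ, δ < l ↔ ∃ n, δ < a n := fun δ => Ordinal.lt_iSup_iff
  refine ⟨l, Order.isSuccLimit_of_exists_between ⟨a 0, (hlt _).2 ⟨1, ha Nat.one_pos⟩⟩
    fun b hb => ?_, hlt⟩
  obtain ⟨n, hn⟩ := (hlt b).1 hb
  exact ⟨a n, hn, (hlt _).2 ⟨n + 1, ha n.lt_succ_self⟩⟩

lemma exists_isSuccLimit_forall_lt (f : Omega1 → Omega1) (β : Omega1) :
    ∃ l, β < l ∧ Order.IsSuccLimit l ∧ ∀ α < l, f α < l := by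
  have step : ∀ γ, ∃ γ', γ < γ' ∧ ∀ α ≤ γ, f α < γ' := fun γ => by
    obtain ⟨γ', hγ'⟩ := exists_gt_of_countable ((countable_Iic γ).union ((countable_Iic γ).image f))
    exact ⟨γ', hγ' γ (Or.inl (mem_Iic.2 le_rfl)),
      fun α hα => hγ' _ (Or.inr (mem_image_of_mem f hα))⟩
  choose g hg using step
  have hmono : StrictMono fun n => g^[n] β := strictMono_nat_of_lt_succ fun n => by
    simpa only [Function.iterate_succ_apply'] using (hg _).1
  obtain ⟨l, hl, hlt⟩ := exists_isSuccLimit_lt_iff hmono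
  refine ⟨l, (hlt β).2 ⟨1, (hg β).1⟩, hl, fun α hα => ?_⟩
  obtain ⟨n, hn⟩ := (hlt α).1 hα
  refine (hlt _).2 ⟨n + 1, ?_⟩
  rw [Function.iterate_succ_apply']
  exact (hg _).2 α hn.le

lemma isClosed_of_forall_isSuccLimit {C : Set Omega1}
    (h : ∀ l, Order.IsSuccLimit l → (∀ β < l, ∃ γ ∈ C, β < γ ∧ γ < l) → l ∈ C) :
    IsClosed C := by
  refine isClosed_of_closure_subset fun l hl => ?_
  by_contra hlC
  -- `Iio (succ l) = Iic l` is a neighbourhood of `l`, so `C` accumulates at `l` from below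
  have hbelow : ∀ s ∈ 𝓝 l, ∃ γ ∈ C, γ ∈ s ∧ γ < l := fun s hs => by
    obtain ⟨γ, ⟨hγs, hγl⟩, hγC⟩ :=
      mem_closure_iff_nhds.mp hl _ (inter_mem hs (Iio_mem_nhds (covBy_succ l).lt))
    rw [(covBy_succ l).Iio_eq] at hγl
    exact ⟨γ, hγC, hγs, hγl.lt_of_ne (ne_of_mem_of_not_mem hγC hlC)⟩
  have hcof : ∀ β < l, ∃ γ ∈ C, β < γ ∧ γ < l := fun β hβ => hbelow _ (Ioi_mem_nhds hβ)
  obtain ⟨γ, -, -, hγl⟩ := hbelow univ univ_mem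
  exact hlC (h l (Order.isSuccLimit_of_exists_between ⟨γ, hγl⟩ fun b hb =>
    let ⟨c, _, hbc, hcl⟩ := hcof b hb; ⟨c, hbc, hcl⟩) hcof)

end Omega1

section Lindelof

variable {X : Type*} [TopologicalSpace X]

theorem LocallyFinite.countable_setOf_inter_nonempty {ι : Type*} {f : ι → Set X}
    (hf : LocallyFinite f) {s : Set X} (hs : IsLindelof s) :
    {i | (f i ∩ s).Nonempty}.Countable := by
  choose N hN hNfin using hf
  obtain ⟨t, htc, -, hst⟩ := hs.elim_nhds_subcover N fun x _ => hN x
  refine (htc.biUnion fun x _ => (hNfin x).countable).mono ?_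
  rintro i ⟨y, hyf, hys⟩
  obtain ⟨x, hxt, hyN⟩ := mem_iUnion₂.mp (hst hys)
  exact mem_biUnion hxt ⟨y, hyf, hyN⟩

theorem LindelofSpace.of_paracompact_of_isLindelof_nhds [ParacompactSpace X]
    [PreconnectedSpace X] (h : ∀ x : X, ∃ s ∈ 𝓝 x, IsLindelof s) : LindelofSpace X := by
  rcases isEmpty_or_nonempty X with _ | ⟨⟨x₀⟩⟩
  · infer_instance
  choose K hKx hK using h
  obtain ⟨v, hvo, hvU, hvlf, hvK⟩ := precise_refinement (fun x => interior (K x))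
    (fun _ => isOpen_interior)
    (iUnion_eq_univ_iff.2 fun x => ⟨x, mem_interior_iff_mem_nhds.2 (hKx x)⟩)
  -- `A n`: the indices reachable from `x₀` by `n` steps of "`v b` meets `K a`"
  let A : ℕ → Set X := fun n => Nat.rec {x₀} (fun _ s => {b | (v b ∩ ⋃ a ∈ s, K a).Nonempty}) n
  have hA : ∀ n, (A n).Countable := fun n => by
    induction n with
    | zero => exact countable_singleton x₀
    | succ n ih => exact hvlf.countable_setOf_inter_nonempty (ih.isLindelof_biUnion fun a _ => hK a)
  have hstep : ∀ n, ∀ a ∈ A n, ∀ b, (v b ∩ v a).Nonempty → b ∈ A (n + 1) :=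
    fun n a ha b ⟨y, hyb, hya⟩ => ⟨y, hyb, mem_biUnion ha (interior_subset (hvK a hya))⟩
  let R : Set X := ⋃ n, A n
  let W : Set X := ⋃ a ∈ R, v a
  have hWopen : IsOpen W := isOpen_biUnion fun a _ => hvo a
  have hWclosed : IsClosed W := isClosed_of_closure_subset fun z hz => by
    obtain ⟨b, hzb⟩ := mem_iUnion.mp (hvU.symm ▸ mem_univ z : z ∈ ⋃ b, v b)
    obtain ⟨y, hyb, hyW⟩ := mem_closure_iff.mp hz (v b) (hvo b) hzb
    obtain ⟨a, haR, hya⟩ := mem_iUnion₂.mp hyW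
    obtain ⟨n, ha⟩ := mem_iUnion.mp haR
    exact mem_biUnion (mem_iUnion.2 ⟨n + 1, hstep n a ha b ⟨y, hyb, hya⟩⟩) hzb
  have hWne : W.Nonempty := by
    obtain ⟨a, hx₀a⟩ := mem_iUnion.mp (hvU.symm ▸ mem_univ x₀ : x₀ ∈ ⋃ b, v b)
    have haA : a ∈ A 1 := ⟨x₀, hx₀a, mem_biUnion rfl (mem_of_mem_nhds (hKx x₀))⟩
    exact ⟨x₀, mem_biUnion (mem_iUnion.2 ⟨1, haA⟩) hx₀a⟩
  have hW : W = univ := IsClopen.eq_univ ⟨hWclosed, hWopen⟩ hWne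
  have hRK : ⋃ a ∈ R, K a = univ := univ_subset_iff.1 <|
    hW ▸ biUnion_mono subset_rfl fun a _ => (hvK a).trans interior_subset
  rw [← isLindelof_univ_iff, ← hRK]
  exact (countable_iUnion hA).isLindelof_biUnion fun a _ => hK a

end Lindelof

namespace Foliation

variable {M : Type*} [TopologicalSpace M] {p q : ℕ} (F : Foliation M p q)

def leaf (x : M) : Set M := {y | F.leafRel x y}

def saturation (S : Set M) : Set M := {y | ∃ x ∈ S, F.leafRel x y}

lemma subset_saturation (S : Set M) : S ⊆ F.saturation S :=
  fun x hx => ⟨x, hx, Relation.EqvGen.refl x⟩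

lemma saturation_mono {S T : Set M} (h : S ⊆ T) : F.saturation S ⊆ F.saturation T :=
  fun _ ⟨x, hx, hxy⟩ => ⟨x, h hx, hxy⟩

lemma saturated_saturation (S : Set M) : F.Saturated (F.saturation S) :=
  fun _ ⟨x, hx, hxy⟩ _ hyz => ⟨x, hx, Relation.EqvGen.trans _ _ _ hxy hyz⟩

lemma Saturated.saturation_subset {F : Foliation M p q} {S : Set M} (hS : F.Saturated S) :
    F.saturation S ⊆ S :=
  fun y ⟨x, hx, hxy⟩ => hS x hx y hxy

lemma saturation_eq_biUnion_leaf (S : Set M) : F.saturation S = ⋃ x ∈ S, F.leaf x := by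
  ext y
  simp [saturation, leaf]

lemma plaqueFibre_eq_range (i : F.ι) (t : Fin q → ℝ) :
    F.plaqueFibre i t = range fun a : Fin p → ℝ => ((F.chart i).symm (a, t) : M) := by
  ext w
  constructor
  · rintro ⟨hw, rfl⟩
    exact ⟨(F.chart i ⟨w, hw⟩).1, by simp⟩
  · rintro ⟨a, rfl⟩
    exact ⟨((F.chart i).symm (a, t)).2, by simp⟩

lemma isPreconnected_plaqueFibre (i : F.ι) (t : Fin q → ℝ) :
    IsPreconnected (F.plaqueFibre i t) := by
  rw [plaqueFibre_eq_range]
  exact isPreconnected_range (by fun_prop)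

lemma isSeparable_plaqueFibre (i : F.ι) (t : Fin q → ℝ) : IsSeparable (F.plaqueFibre i t) := by
  rw [plaqueFibre_eq_range]
  exact isSeparable_range (by fun_prop)

lemma exists_mem_plaqueFibre (x : M) : ∃ i t, x ∈ F.plaqueFibre i t :=
  let ⟨i, hi⟩ := F.covers x
  ⟨i, _, hi, rfl⟩

lemma isPlaque_plaqueFibre {i : F.ι} {t : Fin q → ℝ} {z : M} (hz : z ∈ F.plaqueFibre i t) :
    F.IsPlaque (F.plaqueFibre i t) :=
  ⟨i, t, z, hz, ((F.isPreconnected_plaqueFibre i t).connectedComponentIn hz).symm⟩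

lemma IsPlaque.exists_eq_plaqueFibre {F : Foliation M p q} {P : Set M} (hP : F.IsPlaque P) :
    ∃ i t, P = F.plaqueFibre i t := by
  obtain ⟨i, t, z, hz, rfl⟩ := hP
  exact ⟨i, t, (F.isPreconnected_plaqueFibre i t).connectedComponentIn hz⟩

lemma samePlaque_iff {x y : M} :
    F.samePlaque x y ↔ ∃ i, ∃ (hx : x ∈ F.U i) (hy : y ∈ F.U i),
      (F.chart i ⟨x, hx⟩).2 = (F.chart i ⟨y, hy⟩).2 := by
  constructor
  · rintro ⟨P, hP, hxP, hyP⟩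
    obtain ⟨i, t, rfl⟩ := hP.exists_eq_plaqueFibre
    obtain ⟨hx, hxt⟩ := hxP
    obtain ⟨hy, hyt⟩ := hyP
    exact ⟨i, hx, hy, hxt.trans hyt.symm⟩
  · rintro ⟨i, hx, hy, h⟩
    exact ⟨_, F.isPlaque_plaqueFibre ⟨hx, rfl⟩, ⟨hx, rfl⟩, ⟨hy, h.symm⟩⟩

lemma samePlaque_symm {x y : M} (h : F.samePlaque x y) : F.samePlaque y x :=
  let ⟨P, hP, hx, hy⟩ := h
  ⟨P, hP, hy, hx⟩

lemma mem_iff_of_leafRel {S : Set M} (hS : ∀ x y, F.samePlaque x y → x ∈ S → y ∈ S) {x y : M}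
    (h : F.leafRel x y) : x ∈ S ↔ y ∈ S := by
  induction h with
  | rel a b hab => exact ⟨hS a b hab, hS b a (F.samePlaque_symm hab)⟩
  | refl => exact Iff.rfl
  | symm _ _ _ ih => exact ih.symm
  | trans _ _ _ _ _ ih₁ ih₂ => exact ih₁.trans ih₂

lemma plaqueFibre_subset_leaf {x z : M} {i : F.ι} {t : Fin q → ℝ} (hz : z ∈ F.plaqueFibre i t)
    (hzx : z ∈ F.leaf x) : F.plaqueFibre i t ⊆ F.leaf x :=
  fun _ hw => Relation.EqvGen.trans _ _ _ hzx
    (Relation.EqvGen.rel _ _ ⟨_, F.isPlaque_plaqueFibre hz, hz, hw⟩)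

lemma saturated_of_samePlaque {S : Set M} (hS : ∀ x y, F.samePlaque x y → x ∈ S → y ∈ S) :
    F.Saturated S :=
  fun _ hx _ h => (F.mem_iff_of_leafRel hS h).1 hx

/-- The transversal coordinate of a chart is an open map, so points of `S` near `x` can be slid
along plaques to points of `S` near `y`. -/
lemma Saturated.closure {F : Foliation M p q} {S : Set M} (hS : F.Saturated S) :
    F.Saturated (closure S) := by
  refine F.saturated_of_samePlaque fun x y hxy hx => ?_
  obtain ⟨i, hxi, hyi, hxy⟩ := F.samePlaque_iff.mp hxy
  let τ : F.U i → Fin q → ℝ := fun u => (F.chart i u).2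
  have hτ : IsOpenMap τ := isOpenMap_snd.comp (F.chart i).isOpenMap
  rw [mem_closure_iff] at hx ⊢
  intro W hW hyW
  have hN : IsOpen (Subtype.val '' (τ ⁻¹' (τ '' (Subtype.val ⁻¹' W)))) :=
    (F.isOpen i).isOpenMap_subtype_val _
      ((hτ _ (hW.preimage continuous_subtype_val)).preimage (by fun_prop))
  obtain ⟨_, ⟨s, ⟨w, hwW, hws⟩, rfl⟩, hsS⟩ := hx _ hN ⟨⟨x, hxi⟩, ⟨⟨y, hyi⟩, hyW, hxy.symm⟩, rfl⟩
  exact ⟨w, hwW, hS s hsS w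
    (Relation.EqvGen.rel _ _ (F.samePlaque_iff.mpr ⟨i, s.2, w.2, hws.symm⟩))⟩

lemma plaqueFibre_inter_eq_inter_isOpen (i : F.ι) (t : Fin q → ℝ) {P : Set M}
    (hP : F.IsPlaque P) : ∃ O, IsOpen O ∧ F.plaqueFibre i t ∩ P = F.plaqueFibre i t ∩ O := by
  obtain ⟨j, t', rfl⟩ := hP.exists_eq_plaqueFibre
  rcases (F.plaqueFibre i t ∩ F.plaqueFibre j t').eq_empty_or_nonempty with he | ⟨w₀, hw₀⟩
  · exact ⟨∅, isOpen_empty, by simp [he]⟩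
  refine ⟨F.U j, F.isOpen j, Subset.antisymm (fun w hw => ⟨hw.1, hw.2.1⟩) ?_⟩
  rintro w ⟨⟨hwi, hwt⟩, hwj⟩
  obtain ⟨⟨hw₀i, hw₀t⟩, hw₀j, hw₀t'⟩ := hw₀
  exact ⟨⟨hwi, hwt⟩, hwj,
    (F.compat i j w w₀ hwi hwj hw₀i hw₀j (hwt.trans hw₀t.symm)).trans hw₀t'⟩

variable {L : Set M} {i : F.ι} {t : Fin q → ℝ}

lemma continuous_inclusion_plaqueFibre (h : F.plaqueFibre i t ⊆ L) :
    Continuous[_, F.leafTopology L] (inclusion h) := by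
  refine continuous_generateFrom_iff.2 ?_
  rintro _ ⟨P, hP, -, rfl⟩
  obtain ⟨O, hO, hPO⟩ := F.plaqueFibre_inter_eq_inter_isOpen i t hP
  convert hO.preimage continuous_subtype_val using 1
  ext ⟨w, hw⟩
  simpa [hw] using Set.ext_iff.mp hPO w

lemma isLindelof_preimage_plaqueFibre (h : F.plaqueFibre i t ⊆ L) :
    @IsLindelof L (F.leafTopology L) (Subtype.val ⁻¹' F.plaqueFibre i t) := by
  let _ := F.leafTopology L
  have : SecondCountableTopology (F.plaqueFibre i t) :=
    ((F.chart i).isEmbedding.comp (IsEmbedding.inclusion fun _ hw => hw.1)).secondCountableTopology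
  have hrange : range (inclusion h) = Subtype.val ⁻¹' F.plaqueFibre i t := range_inclusion h
  exact hrange ▸ isLindelof_range (F.continuous_inclusion_plaqueFibre h)

lemma isPreconnected_preimage_plaqueFibre (h : F.plaqueFibre i t ⊆ L) :
    @IsPreconnected L (F.leafTopology L) (Subtype.val ⁻¹' F.plaqueFibre i t) := by
  let _ := F.leafTopology L
  have := Subtype.preconnectedSpace (F.isPreconnected_plaqueFibre i t)
  have hrange : range (inclusion h) = Subtype.val ⁻¹' F.plaqueFibre i t := range_inclusion h
  exact hrange ▸ isPreconnected_range (F.continuous_inclusion_plaqueFibre h)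

lemma preimage_plaqueFibre_mem_nhds (h : F.plaqueFibre i t ⊆ L) {z : L}
    (hz : (z : M) ∈ F.plaqueFibre i t) :
    Subtype.val ⁻¹' F.plaqueFibre i t ∈ @nhds L (F.leafTopology L) z :=
  @IsOpen.mem_nhds L (F.leafTopology L) _ _
    (isOpen_generateFrom_of_mem ⟨_, F.isPlaque_plaqueFibre hz, h, rfl⟩) hz

lemma preconnectedSpace_leaf (x : M) :
    @PreconnectedSpace (F.leaf x) (F.leafTopology (F.leaf x)) := by
  let _ := F.leafTopology (F.leaf x)
  let x₀ : F.leaf x := ⟨x, Relation.EqvGen.refl x⟩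
  let S : Set M := {y | ∃ hy : y ∈ F.leaf x, ⟨y, hy⟩ ∈ connectedComponent x₀}
  have hS : ∀ a b, F.samePlaque a b → a ∈ S → b ∈ S := by
    rintro a b ⟨P, hP, haP, hbP⟩ ⟨ha, haC⟩
    obtain ⟨i, t, rfl⟩ := hP.exists_eq_plaqueFibre
    have hsub := F.plaqueFibre_subset_leaf haP ha
    refine ⟨hsub hbP, ?_⟩
    rw [connectedComponent_eq haC]
    exact (F.isPreconnected_preimage_plaqueFibre hsub).subset_connectedComponent haP hbP
  have hall : ∀ z : F.leaf x, z ∈ connectedComponent x₀ := fun z => by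
    obtain ⟨_, hz⟩ := (F.mem_iff_of_leafRel hS z.2).1 ⟨x₀.2, mem_connectedComponent⟩
    exact hz
  exact ⟨eq_univ_of_forall hall ▸ isPreconnected_connectedComponent⟩

/-- Each point of a leaf has a Lindelöf neighbourhood in the leaf topology, namely its plaque;
a metrisable leaf is paracompact and connected, hence Lindelöf. -/
lemma lindelofSpace_leaf {x : M}
    (hmet : @MetrizableSpace (F.leaf x) (F.leafTopology (F.leaf x))) :
    @LindelofSpace (F.leaf x) (F.leafTopology (F.leaf x)) := by
  let _ := F.leafTopology (F.leaf x)
  let _ := metrizableSpaceMetric (F.leaf x)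
  have := F.preconnectedSpace_leaf x
  refine LindelofSpace.of_paracompact_of_isLindelof_nhds fun z => ?_
  obtain ⟨i, t, hz⟩ := F.exists_mem_plaqueFibre z
  have hsub := F.plaqueFibre_subset_leaf hz z.2
  exact ⟨_, F.preimage_plaqueFibre_mem_nhds hsub hz, F.isLindelof_preimage_plaqueFibre hsub⟩

/-- Being Lindelöf in the leaf topology, the leaf is covered by countably many plaques, each of
them separable in `M`. -/
lemma isSeparable_leaf {x : M}
    (hmet : @MetrizableSpace (F.leaf x) (F.leafTopology (F.leaf x))) :
    IsSeparable (F.leaf x) := by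
  let _ := F.leafTopology (F.leaf x)
  have := F.lindelofSpace_leaf hmet
  choose i t hz using fun z : F.leaf x => F.exists_mem_plaqueFibre z
  obtain ⟨s, hsc, hs⟩ := _root_.countable_cover_nhds fun z =>
    F.preimage_plaqueFibre_mem_nhds (F.plaqueFibre_subset_leaf (hz z) z.2) (hz z)
  have : Countable s := hsc.to_subtype
  refine (IsSeparable.iUnion fun z : s => F.isSeparable_plaqueFibre (i z) (t z)).mono fun y hy => ?_
  obtain ⟨z, hzs, hyz⟩ := mem_iUnion₂.mp (hs.symm ▸ mem_univ (⟨y, hy⟩ : F.leaf x))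
  exact mem_iUnion.2 ⟨⟨z, hzs⟩, hyz⟩

lemma isSeparable_saturation (hleaf : ∀ x, IsSeparable (F.leaf x)) {S : Set M}
    (hS : IsSeparable S) : IsSeparable (F.saturation S) := by
  obtain ⟨D, hDc, hSD⟩ := hS
  have hsat : F.Saturated (closure (F.saturation D)) := (F.saturated_saturation D).closure
  have hsub : F.saturation S ⊆ closure (F.saturation D) :=
    (F.saturation_mono (hSD.trans (closure_mono (F.subset_saturation D)))).trans
      hsat.saturation_subset
  have : Countable D := hDc.to_subtype
  refine IsSeparable.mono (IsSeparable.closure ?_) hsub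
  rw [saturation_eq_biUnion_leaf, biUnion_eq_iUnion]
  exact .iUnion fun d => hleaf d

end Foliation

section Chain

variable {M : Type*} [TopologicalSpace M] {U : Omega1 → Set M}

lemma exists_subset_of_isSeparable (hmono : ∀ α β : Omega1, α < β → closure (U α) ⊆ U β)
    (hcover : ∀ x : M, ∃ α, x ∈ U α) {S : Set M} (hS : IsSeparable S) : ∃ γ, S ⊆ U γ := by
  obtain ⟨D, hDc, hSD⟩ := hS
  choose g hg using hcover
  obtain ⟨γ, hγ⟩ := Omega1.exists_gt_of_countable (hDc.image g)
  have hDU : D ⊆ U γ := fun d hd =>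
    hmono _ _ (hγ _ (mem_image_of_mem g hd)) (subset_closure (hg d))
  exact ⟨Omega1.succ γ, hSD.trans ((closure_mono hDU).trans (hmono _ _ (Omega1.covBy_succ γ).lt))⟩

lemma Foliation.saturated_of_isSuccLimit {p q : ℕ} (F : Foliation M p q)
    (hlim : ∀ l : Omega1, Order.IsSuccLimit (Omega1.toOrdinal l) →
      U l = ⋃ (α : Omega1) (_ : α < l), U α)
    {l : Omega1} (hl : Order.IsSuccLimit l) (h : ∀ δ < l, ∃ γ < l, F.saturation (U δ) ⊆ U γ) :
    F.Saturated (U l) := by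
  intro z hz y hzy
  rw [hlim l (Omega1.isSuccLimit_toOrdinal hl)] at hz ⊢
  obtain ⟨δ, hδ, hzδ⟩ := mem_iUnion₂.mp hz
  obtain ⟨γ, hγ, hsub⟩ := h δ hδ
  exact mem_iUnion₂.mpr ⟨γ, hγ, hsub ⟨z, hzδ, hzy⟩⟩

end Chain

theorem statement11 (p q : ℕ) (M : Type) [TopologicalSpace M]
    (F : Foliation M p q)
    (U : Omega1 → Set M)
    (hsep : ∀ α, TopologicalSpace.SeparableSpace (U α))
    (hmono : ∀ α β : Omega1, α < β → closure (U α) ⊆ U β)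
    (hlim : ∀ l : Omega1, Order.IsSuccLimit (Omega1.toOrdinal l) →
      U l = ⋃ (α : Omega1) (_ : α < l), U α)
    (hcover : ∀ x : M, ∃ α, x ∈ U α)
    (hmet : ∀ L, F.IsLeaf L → @TopologicalSpace.MetrizableSpace L (F.leafTopology L)) :
    IsClosed {α : Omega1 | F.Saturated (U α)} ∧
      ∀ β : Omega1, ∃ α : Omega1, F.Saturated (U α) ∧ β ≤ α := by
  constructor
  · refine Omega1.isClosed_of_forall_isSuccLimit fun l hl hcof =>
      F.saturated_of_isSuccLimit hlim hl fun δ hδ => ?_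
    obtain ⟨γ, hγ, hδγ, hγl⟩ := hcof δ hδ
    exact ⟨γ, hγl, (F.saturation_mono (subset_closure.trans (hmono δ γ hδγ))).trans
      hγ.saturation_subset⟩
  · have hleaf : ∀ x, IsSeparable (F.leaf x) := fun x => F.isSeparable_leaf (hmet _ ⟨x, rfl⟩)
    choose f hf using fun α => exists_subset_of_isSeparable hmono hcover
      (F.isSeparable_saturation hleaf (IsSeparable.of_subtype (U α)))
    intro β
    obtain ⟨l, hβl, hl, hfl⟩ := Omega1.exists_isSuccLimit_forall_lt f β
    exact ⟨l, F.saturated_of_isSuccLimit hlim hl fun δ hδ => ⟨f δ, hfl δ hδ, hf δ⟩, hβl.le⟩
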